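/- arXiv:2410.15848 — 3 statements merged into one kernel-verified Lean document; each statement's English description precedes it below -/
import Mathlib

section
/- Let G_syn be an admissible group w.r.t. a prefix P and let g ∈ G_syn. Then the map S(P) → S(P), s ↦ g(s), is a bijection (with inverse s ↦ g⁻¹(s)) and satisfies g(σ)_{g(s)} = g(σ_s) for all s ∈ S(P) and all σ ∈ A(X). -/
namespace DQBF

/-- Boolean formulas over variables `α`, modeled by their truth functions. -/
abbrev BF (α : Type*) := (α → Bool) → Bool

/-- The evaluation formula of a variable `v`. -/
def ev {α : Type*} (v : α) : BF α := fun τ => τ v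

/-- The assignment `g(σ)` induced by `g : BF(V) → BF(V)` and `σ ∈ A(V)`:
`g(σ)(v) = [g(ev_v)]_σ`. -/
def pushA {α : Type*} (g : BF α → BF α) (σ : α → Bool) : α → Bool :=
  fun v => g (ev v) σ

/-- `g` preserves propositional satisfiability: `[g(φ)]_σ = [φ]_{g(σ)}`. -/
def PreservesSat {α : Type*} (g : BF α → BF α) : Prop :=
  ∀ (φ : BF α) (σ : α → Bool), g φ σ = φ (pushA g σ)

/-- A formula `F` depends only on the variables in `S`. -/
def DependsOnlyOn {α : Type*} (F : BF α) (S : Set α) : Prop :=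
  ∀ τ τ' : α → Bool, (∀ v ∈ S, τ v = τ' v) → F τ = F τ'

variable {X Y : Type*}

/-- Extension of an assignment of the universal variables to all of `V = X ⊕ Y`
(with junk value `false` on `Y`). -/
def extendX (σ : X → Bool) : X ⊕ Y → Bool := Sum.elim σ fun _ => false

/-- The assignment `g(σ) ∈ A(X)` for `σ ∈ A(X)` and admissible `g`:
`g(σ)(x) = [g(ev_x)]_σ` (well-defined via any extension since `g(ev_x)` depends only on `X`). -/
def pushX (g : BF (X ⊕ Y) → BF (X ⊕ Y)) (σ : X → Bool) : X → Bool :=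
  fun x => g (ev (Sum.inl x)) (extendX σ)

/-- An interpretation for the prefix with dependency sets `D`: a family of Skolem
functions, each depending only on its dependency set. -/
structure Interp (D : Y → Set X) where
  sk : Y → BF X
  dep : ∀ y : Y, ∀ σ σ' : X → Bool, (∀ x ∈ D y, σ x = σ' x) → sk y σ = sk y σ'

/-- The induced assignment `σ_s ∈ A(X ⊕ Y)` of `σ ∈ A(X)` and `s ∈ S(P)`. -/
def induced {D : Y → Set X} (σ : X → Bool) (s : Interp D) : X ⊕ Y → Bool :=
  Sum.elim σ fun y => s.sk y σ

/-- Truth value of the DQBF `P.φ` under the interpretation `s`: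
`[P.φ]_s = ⊤` iff `[φ]_{σ_s} = ⊤` for every `σ ∈ A(X)`. -/
def Truth {D : Y → Set X} (φ : BF (X ⊕ Y)) (s : Interp D) : Prop :=
  ∀ σ : X → Bool, φ (induced σ s) = true

/-- A formula `F ∈ BF(Y)` depends on the universal variable `x` if it depends
semantically on some `y ∈ Y` with `x ∈ D_y`. -/
def DependsOn (D : Y → Set X) (F : BF (X ⊕ Y)) (x : X) : Prop :=
  ∃ y : Y, x ∈ D y ∧ ∃ τ τ' : X ⊕ Y → Bool,
    (∀ v, v ≠ Sum.inr y → τ v = τ' v) ∧ F τ ≠ F τ'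

/-- `g`, together with its two-sided inverse `g'`, is admissible w.r.t. the prefix `D`. -/
structure AdmissiblePair (D : Y → Set X) (g g' : BF (X ⊕ Y) → BF (X ⊕ Y)) : Prop where
  left_inv : ∀ φ, g' (g φ) = φ
  right_inv : ∀ φ, g (g' φ) = φ
  presSat : PreservesSat g
  varX : ∀ x : X, DependsOnlyOn (g (ev (Sum.inl x))) (Set.range Sum.inl)
  varY : ∀ y : Y, DependsOnlyOn (g (ev (Sum.inr y))) (Set.range Sum.inr)
  depCond : ∀ (y : Y) (x : X), DependsOn D (g (ev (Sum.inr y))) x →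
    DependsOnlyOn (g' (ev (Sum.inl x))) (Sum.inl '' D y)

/-- An admissible group w.r.t. the prefix `D`: a group (under composition) of
admissible functions. -/
structure AdmissibleGroup (D : Y → Set X) (G : Set (BF (X ⊕ Y) → BF (X ⊕ Y))) : Prop where
  id_mem : id ∈ G
  comp_mem : ∀ g ∈ G, ∀ h ∈ G, (g ∘ h) ∈ G
  inv_mem : ∀ g ∈ G, ∃ g' ∈ G, AdmissiblePair D g g'

/-- The associated group `G_sem` of a syntactic group `G`: all bijections
`f : S(P) → S(P)` such that for all `s` and `σ` there is `g ∈ G` with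
`g(σ)_{f(s)} = g(σ_s)`. -/
def Associated (D : Y → Set X) (G : Set (BF (X ⊕ Y) → BF (X ⊕ Y))) :
    Set (Interp D → Interp D) :=
  {f | Function.Bijective f ∧
    ∀ (s : Interp D) (σ : X → Bool), ∃ g ∈ G,
      induced (pushX g σ) (f s) = pushA g (induced σ s)}

/-- A group of bijections of `S(P)`. -/
structure BijGroup {D : Y → Set X} (G : Set (Interp D → Interp D)) : Prop where
  bij : ∀ f ∈ G, Function.Bijective f
  id_mem : id ∈ G
  comp_mem : ∀ f ∈ G, ∀ h ∈ G, (f ∘ h) ∈ G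
  inv_mem : ∀ f ∈ G, ∀ f', Function.LeftInverse f' f → Function.RightInverse f' f → f' ∈ G

/-- `ψ` is a conjunctive symmetry breaker for the group `G` of bijections of `S(P)`. -/
def ConjSymBreaker {D : Y → Set X} (G : Set (Interp D → Interp D)) (ψ : BF (X ⊕ Y)) : Prop :=
  ∀ s : Interp D, ∃ f ∈ G, Truth ψ (f s)
/-
Since `g` preserves satisfiability, `[g(g⁻¹(ev_v))]_σ = [g⁻¹(ev_v)]_{g(σ)}`, so `σ ↦ g⁻¹(σ)`
undoes `σ ↦ g(σ)` on `A(V)`. Because `g⁻¹(ev_x)` depends only on `X`, the same holds for the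
action on `A(X)`, whatever junk values `extendX` puts on `Y`. An interpretation is determined by
its induced assignments, so the defining equations of `g(s)` and `g⁻¹(s)` make the two maps
mutually inverse, and evaluating the defining equation of `g(s)` at `g(σ)` gives the
compatibility `g(σ)_{g(s)} = g(σ_s)`.
-/

theorem pushA_pushA_of_preservesSat {α : Type*} {g g' : BF α → BF α} (hsat : PreservesSat g)
    (hinv : ∀ φ, g (g' φ) = φ) (σ : α → Bool) : pushA g' (pushA g σ) = σ := by
  funext v
  calc pushA g' (pushA g σ) v = g (g' (ev v)) σ := (hsat _ σ).symm
    _ = σ v := by rw [hinv]; rfl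

theorem Interp.ext_of_induced {D : Y → Set X} {s t : Interp D}
    (h : ∀ σ : X → Bool, induced σ s = induced σ t) : s = t := by
  obtain ⟨sk, _⟩ := s
  obtain ⟨sk', _⟩ := t
  congr
  funext y σ
  exact congrFun (h σ) (Sum.inr y)

section AdmissiblePair

variable {D : Y → Set X} {g g' : BF (X ⊕ Y) → BF (X ⊕ Y)}

theorem AdmissiblePair.pushA_pushA (hpair : AdmissiblePair D g g') (σ : X ⊕ Y → Bool) :
    pushA g' (pushA g σ) = σ :=
  pushA_pushA_of_preservesSat hpair.presSat hpair.right_inv σ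

theorem AdmissiblePair.pushX_pushX (hpair : AdmissiblePair D g g')
    (hpair' : AdmissiblePair D g' g) (σ : X → Bool) : pushX g' (pushX g σ) = σ := by
  funext x
  have hagree : ∀ v ∈ Set.range Sum.inl,
      extendX (pushX g σ) v = pushA g (extendX (Y := Y) σ) v := by
    rintro v ⟨x', rfl⟩
    rfl
  calc pushX g' (pushX g σ) x = g' (ev (Sum.inl x)) (pushA g (extendX σ)) :=
        hpair'.varX x _ _ hagree
    _ = extendX (Y := Y) σ (Sum.inl x) :=
        congrFun (hpair.pushA_pushA (extendX σ)) (Sum.inl x)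
    _ = σ x := rfl

theorem AdmissiblePair.leftInverse_interp (hpair : AdmissiblePair D g g')
    (hpair' : AdmissiblePair D g' g) {gs gs' : Interp D → Interp D}
    (hgs : ∀ (s : Interp D) (σ : X → Bool),
      induced σ (gs s) = pushA g (induced (pushX g' σ) s))
    (hgs' : ∀ (s : Interp D) (σ : X → Bool),
      induced σ (gs' s) = pushA g' (induced (pushX g σ) s)) :
    Function.LeftInverse gs' gs := fun s =>
  Interp.ext_of_induced fun σ => by
    rw [hgs', hgs, hpair.pushX_pushX hpair', hpair.pushA_pushA]

end AdmissiblePair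

theorem stmt_6_general {X Y : Type*} (D : Y → Set X)
    (g g' : BF (X ⊕ Y) → BF (X ⊕ Y))
    (hpair : AdmissiblePair D g g') (hpair' : AdmissiblePair D g' g)
    (gs gs' : Interp D → Interp D)
    (hgs : ∀ (s : Interp D) (σ : X → Bool),
      induced σ (gs s) = pushA g (induced (pushX g' σ) s))
    (hgs' : ∀ (s : Interp D) (σ : X → Bool),
      induced σ (gs' s) = pushA g' (induced (pushX g σ) s)) :
    Function.Bijective gs ∧
    Function.LeftInverse gs' gs ∧ Function.RightInverse gs' gs ∧
    (∀ (s : Interp D) (σ : X → Bool),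
      induced (pushX g σ) (gs s) = pushA g (induced σ s)) := by
  have hleft : Function.LeftInverse gs' gs := hpair.leftInverse_interp hpair' hgs hgs'
  have hright : Function.RightInverse gs' gs := hpair'.leftInverse_interp hpair hgs' hgs
  refine ⟨⟨hleft.injective, hright.surjective⟩, hleft, hright, fun s σ => ?_⟩
  rw [hgs, hpair.pushX_pushX hpair']

/-- `s ↦ g(s)` is a bijection (with inverse `s ↦ g⁻¹(s)`) satisfying
`g(σ)_{g(s)} = g(σ_s)`. -/
theorem stmt_6 {X Y : Type*} [Fintype X] [Fintype Y] (D : Y → Set X)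
    (G : Set (BF (X ⊕ Y) → BF (X ⊕ Y))) (hG : AdmissibleGroup D G)
    (g g' : BF (X ⊕ Y) → BF (X ⊕ Y)) (hg : g ∈ G) (hg' : g' ∈ G)
    (hpair : AdmissiblePair D g g') (hpair' : AdmissiblePair D g' g)
    (gs gs' : Interp D → Interp D)
    (hgs : ∀ (s : Interp D) (σ : X → Bool),
      induced σ (gs s) = pushA g (induced (pushX g' σ) s))
    (hgs' : ∀ (s : Interp D) (σ : X → Bool),
      induced σ (gs' s) = pushA g' (induced (pushX g σ) s)) :
    Function.Bijective gs ∧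
    Function.LeftInverse gs' gs ∧ Function.RightInverse gs' gs ∧
    (∀ (s : Interp D) (σ : X → Bool),
      induced (pushX g σ) (gs s) = pushA g (induced σ s)) :=
  stmt_6_general D g g' hpair hpair' gs gs' hgs hgs'

end DQBF
end

section
/- If G_syn is a syntactic symmetry group for a DQBF P.φ, then its associated group G_sem is a semantic symmetry group for P.φ; that is, [P.φ]_s = [P.φ]_{f(s)} for every f ∈ G_sem and every interpretation s ∈ S(P). -/
namespace DQBF

variable {X Y : Type*}

/-!
For `f ∈ G_sem`, `s` and `σ`, pick `g` with `g(σ)_{f(s)} = g(σ_s)`; then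
`[φ]_{σ_s} = [g⁻¹(φ)]_{g(σ)_{f(s)}}`, and `P.g⁻¹(φ)` is true under `f(s)` whenever `P.φ` is.
So truth transfers from `f(s)` back to `s`; the other direction follows because `f` is a
permutation of the finite set `S(P)`.
-/

lemma _root_.Function.Injective.imp_apply_of_apply_imp {α : Type*} [Finite α] {f : α → α}
    (hf : f.Injective) {p : α → Prop} (h : ∀ a, p (f a) → p a) (a : α) (ha : p a) :
    p (f a) := by
  have iterate_imp : ∀ m b, p (f^[m] b) → p b := by
    intro m
    induction m with
    | zero => exact fun _ => id
    | succ m ih => exact fun b hb => h b (ih (f b) hb)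
  -- `a` is a periodic point of `f`, so `a = f^[m] (f a)` for some `m`.
  obtain ⟨n, hn, hper⟩ := hf.mem_periodicPts a
  obtain ⟨m, rfl⟩ := Nat.exists_eq_add_one_of_ne_zero hn.ne'
  refine iterate_imp m (f a) ?_
  rwa [← Function.iterate_succ_apply, hper.eq]

lemma PreservesSat.apply_eq_inv_apply_pushA {α : Type*} {g g' : BF α → BF α}
    (hg : PreservesSat g) (hgg' : Function.RightInverse g' g) (φ : BF α) (ρ : α → Bool) :
    φ ρ = g' φ (pushA g ρ) := by
  rw [← hg (g' φ) ρ, hgg' φ]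

lemma Interp.sk_injective {D : Y → Set X} :
    Function.Injective (Interp.sk : Interp D → Y → BF X) := by
  rintro ⟨_, _⟩ ⟨_, _⟩ rfl
  rfl

instance Interp.finite [Finite X] [Finite Y] (D : Y → Set X) :
    Finite (Interp D) :=
  Finite.of_injective _ Interp.sk_injective

lemma Truth.of_apply_associated {D : Y → Set X}
    {G : Set (BF (X ⊕ Y) → BF (X ⊕ Y))} (hG : AdmissibleGroup D G) {φ : BF (X ⊕ Y)}
    (hsym : ∀ g ∈ G, ∀ s : Interp D, Truth φ s ↔ Truth (g φ) s)
    {f : Interp D → Interp D} (hf : f ∈ Associated D G) (s : Interp D)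
    (hfs : Truth φ (f s)) : Truth φ s := by
  intro σ
  obtain ⟨g, hgG, hg⟩ := hf.2 s σ
  obtain ⟨g', hg'G, hgg'⟩ := hG.inv_mem g hgG
  rw [hgg'.presSat.apply_eq_inv_apply_pushA hgg'.right_inv φ, ← hg]
  exact (hsym g' hg'G (f s)).mp hfs (pushX g σ)

/-- if `G_syn` is a syntactic symmetry group for `P.φ`, then its
associated group is a semantic symmetry group for `P.φ`. -/
theorem stmt_10 {X Y : Type*} [Fintype X] [Fintype Y] (D : Y → Set X)
    (G : Set (BF (X ⊕ Y) → BF (X ⊕ Y))) (hG : AdmissibleGroup D G)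
    (φ : BF (X ⊕ Y))
    (hsym : ∀ g ∈ G, ∀ s : Interp D, Truth φ s ↔ Truth (g φ) s) :
    ∀ f ∈ Associated D G, ∀ s : Interp D, Truth φ s ↔ Truth φ (f s) := by
  intro f hf s
  have backward := Truth.of_apply_associated hG hsym hf
  exact ⟨hf.1.injective.imp_apply_of_apply_imp backward s, backward s⟩

end DQBF
end

section
/- Let P be a topologically sorted prefix with existential variables Y = {y_1,…,y_k} and dependency sets D_1,…,D_k ⊆ X, let G_syn be an admissible group w.r.t. P, and let G ⊆ G_syn be a subset such that for all g ∈ G and all i, j ∈ {1,…,k}: (1) g(ev_x) depends only on D_i for every x ∈ D_i; (2) g(ev_{y_i}) depends only on {y_j : D_j = D_i}; and (3) if D_i and D_j are incomparable and g(ev_{y_i}) ≠ ev_{y_i}, then g(ev_{y_j}) = ev_{y_j} and g(ev_x) = ev_x for every x ∈ D_j \ D_i. Define ψ ∈ BF(V) by: ψ(τ) = true iff for every g ∈ G and every i ∈ {1,…,k}, if τ(x) = [g(ev_x)]_τ for all x ∈ D_i and τ(y_j) = [g(ev_{y_j})]_τ for all j < i, then τ(y_i) = true implies [g(ev_{y_i})]_τ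 = true. Then ψ is a conjunctive symmetry breaker for the associated group of G_syn. -/
namespace DQBF

variable {X Y : Type*}

/-! ### Auxiliary machinery for the proof of `stmt_14` -/

section Stmt14Aux

private lemma pushX_id' {X Y : Type*} (σ : X → Bool) :
    pushX (Y := Y) id σ = σ := rfl

private lemma pushA_id' {X Y : Type*} (τ : X ⊕ Y → Bool) :
    pushA (id : BF (X ⊕ Y) → BF (X ⊕ Y)) τ = τ := rfl

private lemma pushA_comp' {X Y : Type*} {g h : BF (X ⊕ Y) → BF (X ⊕ Y)}
    (hg : PreservesSat g) (τ : X ⊕ Y → Bool) :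
    pushA (g ∘ h) τ = pushA h (pushA g τ) := by
  funext v
  exact hg (h (ev v)) τ

private lemma pushX_comp' {X Y : Type*} {g h : BF (X ⊕ Y) → BF (X ⊕ Y)}
    (hg : PreservesSat g)
    (hh : ∀ x : X, DependsOnlyOn (h (ev (Sum.inl x))) (Set.range Sum.inl))
    (σ : X → Bool) : pushX (g ∘ h) σ = pushX h (pushX g σ) := by
  funext x
  show (g ∘ h) (ev (Sum.inl x)) (extendX σ) = h (ev (Sum.inl x)) (extendX (pushX g σ))
  rw [Function.comp_apply, hg (h (ev (Sum.inl x))) (extendX σ)]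
  exact hh x _ _ (by rintro v ⟨z, rfl⟩; rfl)

private lemma eval_inl' {X Y : Type*} {g : BF (X ⊕ Y) → BF (X ⊕ Y)}
    (hg : ∀ x : X, DependsOnlyOn (g (ev (Sum.inl x))) (Set.range Sum.inl))
    {D : Y → Set X} (t : Interp D) (σ : X → Bool) (x : X) :
    g (ev (Sum.inl x)) (induced σ t) = pushX g σ x :=
  hg x _ _ (by rintro v ⟨z, rfl⟩; rfl)

private lemma dep_lemma' {X : Type*} {k : ℕ} {D : Fin k → Set X}
    {g g' : BF (X ⊕ Fin k) → BF (X ⊕ Fin k)}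
    (pair : AdmissiblePair D g g') (t : Interp D) (i : Fin k)
    (σ σ' : X → Bool) (hagree : ∀ x ∈ D i, σ x = σ' x) :
    g (ev (Sum.inr i)) (induced (pushX g' σ) t)
      = g (ev (Sum.inr i)) (induced (pushX g' σ') t) := by
  classical
  set F := g (ev (Sum.inr i)) with hF
  set A := induced (pushX g' σ) t with hA
  set B := induced (pushX g' σ') t with hB
  have hkey : ∀ S : Finset (Fin k),
      F (Sum.elim (pushX g' σ')
        (fun j => if j ∈ S then A (Sum.inr j) else B (Sum.inr j))) = F B := by
    intro S
    induction S using Finset.induction with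
    | empty =>
        have : (Sum.elim (pushX g' σ')
            (fun j => if j ∈ (∅ : Finset (Fin k)) then A (Sum.inr j) else B (Sum.inr j)))
            = B := by
          funext v; cases v with
          | inl x => rfl
          | inr j => simp [hB, induced]
        rw [this]
    | @insert a S' ha ih =>
        by_cases hdep : ∃ τ τ' : X ⊕ Fin k → Bool,
            (∀ v, v ≠ Sum.inr a → τ v = τ' v) ∧ F τ ≠ F τ'
        · have hAB : A (Sum.inr a) = B (Sum.inr a) := by
            show t.sk a (pushX g' σ) = t.sk a (pushX g' σ')
            apply t.dep
            intro x hx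
            have hd := pair.depCond i x ⟨a, hx, hdep⟩
            exact hd (extendX σ) (extendX σ')
              (by rintro v ⟨z, hz, rfl⟩; simpa [extendX] using hagree z hz)
          have : (Sum.elim (pushX g' σ')
              (fun j => if j ∈ insert a S' then A (Sum.inr j) else B (Sum.inr j)))
              = (Sum.elim (pushX g' σ')
              (fun j => if j ∈ S' then A (Sum.inr j) else B (Sum.inr j))) := by
            funext v; cases v with
            | inl x => rfl
            | inr j =>
                by_cases hj : j = a
                · subst hj; simp [ha, hAB]
                · simp [Finset.mem_insert, hj]
          rw [this, ih]
        · push_neg at hdep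
          have step : F (Sum.elim (pushX g' σ')
              (fun j => if j ∈ insert a S' then A (Sum.inr j) else B (Sum.inr j)))
              = F (Sum.elim (pushX g' σ')
              (fun j => if j ∈ S' then A (Sum.inr j) else B (Sum.inr j))) := by
            apply hdep
            intro v hv
            cases v with
            | inl x => rfl
            | inr j =>
                have hj : j ≠ a := fun h => hv (by rw [h])
                simp [Finset.mem_insert, hj]
          rw [step, ih]
  have h1 : F A = F (Sum.elim (pushX g' σ')
      (fun j => if j ∈ (Finset.univ : Finset (Fin k)) then A (Sum.inr j) else B (Sum.inr j))) := by
    apply pair.varY i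
    rintro v ⟨j, rfl⟩
    simp
  rw [h1, hkey Finset.univ]

/-- The measure used in the minimization. -/
private def Mval {X : Type*} [Fintype X] [DecidableEq X] {k : ℕ} {D : Fin k → Set X}
    (t : Interp D) : ℕ :=
  ∑ i : Fin k, (Fintype.card (X → Bool) + 1) ^ (k - 1 - (i : ℕ)) *
    (Finset.univ.filter fun σ : X → Bool => t.sk i σ = true).card

private lemma geom_aux (N : ℕ) : ∀ n : ℕ,
    (∑ e ∈ Finset.range n, (N + 1) ^ e * N) + 1 = (N + 1) ^ n
  | 0 => by simp
  | (n + 1) => by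
      rw [Finset.sum_range_succ]
      have ih := geom_aux N n
      calc (∑ e ∈ Finset.range n, (N + 1) ^ e * N) + (N + 1) ^ n * N + 1
          = ((∑ e ∈ Finset.range n, (N + 1) ^ e * N) + 1) + (N + 1) ^ n * N := by ring
        _ = (N + 1) ^ n + (N + 1) ^ n * N := by rw [ih]
        _ = (N + 1) ^ (n + 1) := by ring

end Stmt14Aux

section Stmt14Step

open Finset

private lemma step_lemma {X : Type*} [Fintype X] [DecidableEq X] {k : ℕ} {D : Fin k → Set X}
    (hsorted : ∀ i j : Fin k, D i ⊂ D j → i < j)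
    {Gsyn : Set (BF (X ⊕ Fin k) → BF (X ⊕ Fin k))} (hG : AdmissibleGroup D Gsyn)
    {G : Set (BF (X ⊕ Fin k) → BF (X ⊕ Fin k))} (hsub : G ⊆ Gsyn)
    (c1 : ∀ g ∈ G, ∀ i : Fin k, ∀ x ∈ D i,
      DependsOnlyOn (g (ev (Sum.inl x))) (Sum.inl '' D i))
    (c2 : ∀ g ∈ G, ∀ i : Fin k,
      DependsOnlyOn (g (ev (Sum.inr i))) (Sum.inr '' {j : Fin k | D j = D i}))
    (c3 : ∀ g ∈ G, ∀ i j : Fin k, (¬ D i ⊆ D j ∧ ¬ D j ⊆ D i) →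
      g (ev (Sum.inr i)) ≠ ev (Sum.inr i) →
      g (ev (Sum.inr j)) = ev (Sum.inr j) ∧
        ∀ x ∈ D j \ D i, g (ev (Sum.inl x)) = ev (Sum.inl x))
    {g : BF (X ⊕ Fin k) → BF (X ⊕ Fin k)} (hgmem : g ∈ G)
    (t : Interp D) (σ₀ : X → Bool) (i₀ : Fin k)
    (PX : ∀ x ∈ D i₀, σ₀ x = g (ev (Sum.inl x)) (induced σ₀ t))
    (PY : ∀ j : Fin k, j < i₀ → t.sk j σ₀ = g (ev (Sum.inr j)) (induced σ₀ t))
    (Fi : t.sk i₀ σ₀ = true)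
    (Ff : g (ev (Sum.inr i₀)) (induced σ₀ t) = false) :
    ∃ t' : Interp D,
      (∀ σ, ∃ h ∈ Gsyn, induced (pushX h σ) t' = pushA h (induced σ t)) ∧
      (∀ σ, ∃ h ∈ Gsyn, induced (pushX h σ) t = pushA h (induced σ t')) ∧
      Mval t' < Mval t := by
  classical
  obtain ⟨g', hg'S, pair⟩ := hG.inv_mem g (hsub hgmem)
  obtain ⟨g'', hg''S, pair'⟩ := hG.inv_mem g' hg'S
  have hpres : PreservesSat g := pair.presSat
  have hpres' : PreservesSat g' := pair'.presSat
  have hvarX := pair.varX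
  have hvarX' := pair'.varX
  have hrg : g ∘ g' = id := funext pair.right_inv
  have hlg : g' ∘ g = id := funext pair.left_inv
  have hXgg' : ∀ σ : X → Bool, pushX g (pushX g' σ) = σ := by
    intro σ; rw [← pushX_comp' hpres' hvarX, hlg, pushX_id']
  have hXg'g : ∀ σ : X → Bool, pushX g' (pushX g σ) = σ := by
    intro σ; rw [← pushX_comp' hpres hvarX', hrg, pushX_id']
  have hAg'g : ∀ τ : X ⊕ Fin k → Bool, pushA g' (pushA g τ) = τ := by
    intro τ; rw [← pushA_comp' hpres, hrg, pushA_id']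
  -- the region
  set Rgn : (X → Bool) → Prop := fun σ => ∀ x ∈ D i₀, σ x = σ₀ x with hRgn
  have hR0 : Rgn σ₀ := fun _ _ => rfl
  set τ₀ := induced σ₀ t with hτ₀
  -- X-evaluation facts
  have F1 : ∀ (σ : X → Bool) (x : X),
      g (ev (Sum.inl x)) (induced σ t) = pushX g σ x :=
    fun σ x => eval_inl' hvarX t σ x
  have F2 : ∀ x ∈ D i₀, pushX g σ₀ x = σ₀ x := by
    intro x hx; rw [← F1 σ₀ x]; exact (PX x hx).symm
  have F3 : ∀ σ, Rgn σ → ∀ x ∈ D i₀, pushX g σ x = σ₀ x := by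
    intro σ hR x hx
    have h1 : pushX g σ x = pushX g σ₀ x := by
      apply c1 g hgmem i₀ x hx (extendX σ) (extendX σ₀)
      rintro v ⟨z, hz, rfl⟩
      simpa [extendX] using hR z hz
    rw [h1]; exact F2 x hx
  have F4 : ∀ σ, Rgn σ → Rgn (pushX g σ) := fun σ hR x hx => F3 σ hR x hx
  -- region preserved by the inverse map
  have F5 : ∀ σ, Rgn σ → Rgn (pushX g' σ) := by
    intro σ hR
    set res : (X → Bool) → (↥(D i₀) → Bool) := fun σ z => σ z.1 with hres
    set ext : (↥(D i₀) → Bool) → (X → Bool) :=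
      fun ρ x => if h : x ∈ D i₀ then ρ ⟨x, h⟩ else false with hext
    have hresext : ∀ ρ, res (ext ρ) = ρ := by
      intro ρ; funext z; simp [hres, hext]
    set θ : (↥(D i₀) → Bool) → (↥(D i₀) → Bool) := fun ρ => res (pushX g (ext ρ)) with hθdef
    have hθ : ∀ σ' : X → Bool, θ (res σ') = res (pushX g σ') := by
      intro σ'
      funext z
      show pushX g (ext (res σ')) z.1 = pushX g σ' z.1
      apply c1 g hgmem i₀ z.1 z.2 (extendX (ext (res σ'))) (extendX σ')
      rintro v ⟨w, hw, rfl⟩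
      simp [extendX, hext, hres, hw]
    have hsurj : Function.Surjective θ := by
      intro ρ
      refine ⟨res (pushX g' (ext ρ)), ?_⟩
      rw [hθ, hXgg', hresext]
    have hinj : Function.Injective θ := Finite.injective_iff_surjective.mpr hsurj
    have h1 : res σ = res σ₀ := by funext z; exact hR z.1 z.2
    have h2 : θ (res (pushX g' σ)) = res σ := by rw [hθ, hXgg']
    have h3 : θ (res σ₀) = res σ₀ := by
      rw [hθ]; funext z; exact F2 z.1 z.2
    have h4 : res (pushX g' σ) = res σ₀ := hinj (by rw [h2, h1, h3])
    intro x hx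
    exact congrFun h4 ⟨x, hx⟩
  -- y_{i₀} is moved by g
  have hmoved : g (ev (Sum.inr i₀)) ≠ ev (Sum.inr i₀) := by
    intro h
    rw [h] at Ff
    have : t.sk i₀ σ₀ = false := Ff
    rw [Fi] at this
    simp at this
  -- class-local evaluation
  have F7 : ∀ (j : Fin k) (σ : X → Bool),
      (∀ l : Fin k, D l = D j → t.sk l σ = t.sk l σ₀) →
      g (ev (Sum.inr j)) (induced σ t) = g (ev (Sum.inr j)) τ₀ := by
    intro j σ h
    apply c2 g hgmem j
    rintro v ⟨l, hl, rfl⟩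
    simpa [induced, hτ₀] using h l hl
  have F8 : ∀ σ, Rgn σ → ∀ l : Fin k, D l ⊆ D i₀ → t.sk l σ = t.sk l σ₀ :=
    fun σ hR l hsubl => t.dep l σ σ₀ (fun x hx => hR x (hsubl hx))
  have Fx : ∀ σ, Rgn σ → ∀ x : X,
      (x ∈ D i₀ ∨ g (ev (Sum.inl x)) = ev (Sum.inl x)) → pushX g σ x = σ x := by
    intro σ hR x hx
    rcases hx with hx | hx
    · rw [F3 σ hR x hx]; exact (hR x hx).symm
    · show g (ev (Sum.inl x)) (extendX σ) = σ x
      rw [hx]; rfl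
  -- the new value function
  set valfun : Fin k → (X → Bool) → Bool :=
    fun i σ' => g (ev (Sum.inr i)) (induced (pushX g' σ') t) with hvalfun
  have F9a : ∀ σ', Rgn σ' → valfun i₀ σ' = false := by
    intro σ' hR
    have hR2 := F5 σ' hR
    show g (ev (Sum.inr i₀)) (induced (pushX g' σ') t) = false
    rw [F7 i₀ (pushX g' σ') (fun l hl => F8 _ hR2 l (le_of_eq hl))]
    exact Ff
  have F9b : ∀ σ', Rgn σ' → ∀ j : Fin k, D j = D i₀ → j < i₀ → valfun j σ' = t.sk j σ' := by
    intro σ' hR j hDj hj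
    have hR2 := F5 σ' hR
    show g (ev (Sum.inr j)) (induced (pushX g' σ') t) = t.sk j σ'
    rw [F7 j (pushX g' σ') (fun l hl => F8 _ hR2 l (le_of_eq (hl.trans hDj))), ← PY j hj]
    exact t.dep j σ₀ σ' (fun x hx => (hR x (hDj ▸ hx)).symm)
  have F9c : ∀ σ', Rgn σ' → ∀ i : Fin k, ¬ (D i₀ ⊆ D i) → valfun i σ' = t.sk i σ' := by
    intro σ' hR i hns
    have hR2 : Rgn (pushX g' σ') := F5 σ' hR
    have hback : pushX g (pushX g' σ') = σ' := hXgg' σ'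
    by_cases hmov : g (ev (Sum.inr i)) = ev (Sum.inr i)
    · have h1 : valfun i σ' = t.sk i (pushX g' σ') := by
        show g (ev (Sum.inr i)) (induced (pushX g' σ') t) = _
        rw [hmov]; rfl
      have h2 : t.sk i (pushX g' σ') = t.sk i σ' := by
        apply t.dep
        intro x hx
        have hfix : pushX g (pushX g' σ') x = pushX g' σ' x := by
          apply Fx _ hR2 x
          by_cases hxE : x ∈ D i₀
          · exact Or.inl hxE
          · right
            by_cases hds : D i ⊆ D i₀
            · exact absurd (hds hx) hxE
            · exact (c3 g hgmem i₀ i ⟨hns, hds⟩ hmoved).2 x ⟨hx, hxE⟩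
        rw [hback] at hfix
        exact hfix.symm
      rw [h1, h2]
    · have hds : D i ⊆ D i₀ := by
        by_contra hds
        exact hmov ((c3 g hgmem i₀ i ⟨hns, hds⟩ hmoved).1)
      have hss : D i ⊂ D i₀ := ⟨hds, hns⟩
      have hlt : i < i₀ := hsorted i i₀ hss
      have h1 : valfun i σ' = g (ev (Sum.inr i)) τ₀ :=
        F7 i (pushX g' σ') (fun l hl => F8 _ hR2 l (hl ▸ hds))
      rw [h1, ← PY i hlt]
      exact t.dep i σ₀ σ' (fun x hx => (hR x (hds hx)).symm)
  -- the modified interpretation t'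
  have hdepi : ∀ (i : Fin k) (σa σb : X → Bool), (∀ x ∈ D i, σa x = σb x) →
      (if Rgn σa then valfun i σa else t.sk i σa)
        = (if Rgn σb then valfun i σb else t.sk i σb) := by
    intro i σa σb hag
    by_cases hsubE : D i₀ ⊆ D i
    · have hiff : Rgn σa ↔ Rgn σb := by
        constructor
        · intro h x hx; rw [← hag x (hsubE hx)]; exact h x hx
        · intro h x hx; rw [hag x (hsubE hx)]; exact h x hx
      by_cases ha : Rgn σa
      · rw [if_pos ha, if_pos (hiff.mp ha)]
        exact dep_lemma' pair t i σa σb hag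
      · rw [if_neg ha, if_neg (fun h => ha (hiff.mpr h))]
        exact t.dep i σa σb hag
    · have ea : ∀ σc, (if Rgn σc then valfun i σc else t.sk i σc) = t.sk i σc := by
        intro σc
        by_cases h : Rgn σc
        · rw [if_pos h]; exact F9c σc h i hsubE
        · rw [if_neg h]
      rw [ea, ea]
      exact t.dep i σa σb hag
  set t' : Interp D := ⟨fun i σ' => if Rgn σ' then valfun i σ' else t.sk i σ', hdepi⟩ with ht'
  -- forward relation
  have eq1 : ∀ σ, Rgn σ → induced (pushX g σ) t' = pushA g (induced σ t) := by
    intro σ hR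
    funext v
    cases v with
    | inl x =>
        show pushX g σ x = g (ev (Sum.inl x)) (induced σ t)
        exact (F1 σ x).symm
    | inr i =>
        show t'.sk i (pushX g σ) = g (ev (Sum.inr i)) (induced σ t)
        have hRg := F4 σ hR
        show (if Rgn (pushX g σ) then valfun i (pushX g σ) else t.sk i (pushX g σ)) = _
        rw [if_pos hRg]
        show g (ev (Sum.inr i)) (induced (pushX g' (pushX g σ)) t) = _
        rw [hXg'g σ]
  have B1 : ∀ σ, ∃ h ∈ Gsyn, induced (pushX h σ) t' = pushA h (induced σ t) := by
    intro σ
    by_cases hR : Rgn σ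
    · exact ⟨g, hsub hgmem, eq1 σ hR⟩
    · refine ⟨id, hG.id_mem, ?_⟩
      rw [pushX_id', pushA_id']
      funext v
      cases v with
      | inl x => rfl
      | inr i =>
          show (if Rgn σ then valfun i σ else t.sk i σ) = t.sk i σ
          rw [if_neg hR]
  have B2 : ∀ σ, ∃ h ∈ Gsyn, induced (pushX h σ) t = pushA h (induced σ t') := by
    intro σ
    by_cases hR : Rgn σ
    · refine ⟨g', hg'S, ?_⟩
      have hR2 : Rgn (pushX g' σ) := F5 σ hR
      have key := eq1 (pushX g' σ) hR2
      rw [hXgg' σ] at key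
      rw [key, hAg'g]
    · refine ⟨id, hG.id_mem, ?_⟩
      rw [pushX_id', pushA_id']
      funext v
      cases v with
      | inl x => rfl
      | inr i =>
          show t.sk i σ = (if Rgn σ then valfun i σ else t.sk i σ)
          rw [if_neg hR]
  -- measure decreases
  refine ⟨t', B1, B2, ?_⟩
  set N := Fintype.card (X → Bool) with hN
  have Ma : ∀ j : Fin k, j < i₀ → ∀ σ', t'.sk j σ' = t.sk j σ' := by
    intro j hj σ'
    show (if Rgn σ' then valfun j σ' else t.sk j σ') = t.sk j σ'
    by_cases hR : Rgn σ'
    · rw [if_pos hR]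
      by_cases hsubE : D i₀ ⊆ D j
      · have heq : D i₀ = D j := by
          by_contra hEq
          have hss : D i₀ ⊂ D j := ⟨hsubE, fun h => hEq (subset_antisymm hsubE h)⟩
          exact absurd (hsorted i₀ j hss) (lt_asymm hj)
        exact F9b σ' hR j heq.symm hj
      · exact F9c σ' hR j hsubE
    · rw [if_neg hR]
  have Mb : ∀ σ', t'.sk i₀ σ' = true → t.sk i₀ σ' = true := by
    intro σ' h
    by_cases hR : Rgn σ'
    · exfalso
      have : (if Rgn σ' then valfun i₀ σ' else t.sk i₀ σ') = true := h
      rw [if_pos hR, F9a σ' hR] at this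
      exact Bool.false_ne_true this
    · have : (if Rgn σ' then valfun i₀ σ' else t.sk i₀ σ') = true := h
      rwa [if_neg hR] at this
  have Mc1 : t'.sk i₀ σ₀ = false := by
    show (if Rgn σ₀ then valfun i₀ σ₀ else t.sk i₀ σ₀) = false
    rw [if_pos hR0]
    exact F9a σ₀ hR0
  -- counting
  set cnt : Fin k → Interp D → ℕ :=
    fun j u => (Finset.univ.filter fun σ : X → Bool => u.sk j σ = true).card with hcnt
  set c : Fin k → ℕ := fun j => (N + 1) ^ (k - 1 - (j : ℕ)) with hc
  have hMval : ∀ u : Interp D, Mval u = ∑ j : Fin k, c j * cnt j u := by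
    intro u; rfl
  have hcnt_lt : cnt i₀ t' < cnt i₀ t := by
    apply Finset.card_lt_card
    rw [Finset.ssubset_iff_of_subset]
    · refine ⟨σ₀, ?_, ?_⟩
      · simp only [Finset.mem_filter, Finset.mem_univ, true_and]
        exact Fi
      · simp only [Finset.mem_filter, Finset.mem_univ, true_and]
        show ¬ (if Rgn σ₀ then valfun i₀ σ₀ else t.sk i₀ σ₀) = true
        rw [if_pos hR0, F9a σ₀ hR0]
        simp
    · intro σ' hσ'
      simp only [Finset.mem_filter, Finset.mem_univ, true_and] at hσ' ⊢
      exact Mb σ' hσ'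
  have hcnt_eq : ∀ j : Fin k, j < i₀ → cnt j t' = cnt j t := by
    intro j hj
    show (Finset.univ.filter fun σ => t'.sk j σ = true).card = _
    congr 1
    apply Finset.filter_congr
    intro σ' _
    rw [Ma j hj σ']
  have hcnt_le : ∀ (j : Fin k) (u : Interp D), cnt j u ≤ N := by
    intro j u
    calc cnt j u ≤ (Finset.univ : Finset (X → Bool)).card := Finset.card_filter_le _ _
      _ = N := Finset.card_univ
  -- splitting of the sum
  have hsplit : ∀ u : Interp D,
      Mval u = (∑ j ∈ Finset.univ.filter (fun j : Fin k => j < i₀), c j * cnt j u)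
        + c i₀ * cnt i₀ u
        + ∑ j ∈ Finset.univ.filter (fun j : Fin k => i₀ < j), c j * cnt j u := by
    intro u
    rw [hMval u, ← Finset.sum_filter_add_sum_filter_not Finset.univ (fun j : Fin k => j < i₀)]
    have hset : Finset.univ.filter (fun j : Fin k => ¬ j < i₀)
        = insert i₀ (Finset.univ.filter fun j : Fin k => i₀ < j) := by
      ext j
      simp only [Finset.mem_filter, Finset.mem_univ, true_and, Finset.mem_insert]
      rw [Fin.lt_def, Fin.lt_def, Fin.ext_iff]
      omega
    rw [hset, Finset.sum_insert (by simp)]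
    ring
  -- the geometric bound
  have hgeo : (∑ j ∈ Finset.univ.filter (fun j : Fin k => i₀ < j), c j * N)
      < c i₀ := by
    have himg : ∀ j ∈ Finset.univ.filter (fun j : Fin k => i₀ < j),
        (k - 1 - (j : ℕ)) ∈ Finset.range (k - 1 - (i₀ : ℕ)) := by
      intro j hj
      simp only [Finset.mem_filter, Finset.mem_univ, true_and] at hj
      have h1 : (i₀ : ℕ) < (j : ℕ) := hj
      have h2 : (j : ℕ) < k := j.2
      simp only [Finset.mem_range]
      omega
    have hinj : Set.InjOn (fun j : Fin k => k - 1 - (j : ℕ))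
        (Finset.univ.filter (fun j : Fin k => i₀ < j)) := by
      intro a ha b hb hab
      have h2 : (a : ℕ) < k := a.2
      have h3 : (b : ℕ) < k := b.2
      simp only at hab
      exact Fin.ext (by omega)
    calc (∑ j ∈ Finset.univ.filter (fun j : Fin k => i₀ < j), c j * N)
        = ∑ e ∈ (Finset.univ.filter (fun j : Fin k => i₀ < j)).image
            (fun j : Fin k => k - 1 - (j : ℕ)), (N + 1) ^ e * N := by
          rw [Finset.sum_image (fun a ha b hb h => hinj ha hb h)]
      _ ≤ ∑ e ∈ Finset.range (k - 1 - (i₀ : ℕ)), (N + 1) ^ e * N := by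
          apply Finset.sum_le_sum_of_subset
          intro e he
          simp only [Finset.mem_image] at he
          obtain ⟨j, hj, rfl⟩ := he
          exact himg j hj
      _ < (N + 1) ^ (k - 1 - (i₀ : ℕ)) := by
          have := geom_aux N (k - 1 - (i₀ : ℕ))
          omega
  -- final arithmetic
  have e1 : ∑ j ∈ Finset.univ.filter (fun j : Fin k => j < i₀), c j * cnt j t'
      = ∑ j ∈ Finset.univ.filter (fun j : Fin k => j < i₀), c j * cnt j t := by
    apply Finset.sum_congr rfl
    intro j hj
    simp only [Finset.mem_filter, Finset.mem_univ, true_and] at hj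
    rw [hcnt_eq j hj]
  have e2 : c i₀ * cnt i₀ t' + c i₀ ≤ c i₀ * cnt i₀ t := by
    have : cnt i₀ t' + 1 ≤ cnt i₀ t := hcnt_lt
    calc c i₀ * cnt i₀ t' + c i₀ = c i₀ * (cnt i₀ t' + 1) := by ring
      _ ≤ c i₀ * cnt i₀ t := Nat.mul_le_mul_left _ this
  have e3 : ∑ j ∈ Finset.univ.filter (fun j : Fin k => i₀ < j), c j * cnt j t'
      ≤ ∑ j ∈ Finset.univ.filter (fun j : Fin k => i₀ < j), c j * N := by
    apply Finset.sum_le_sum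
    intro j _
    exact Nat.mul_le_mul_left _ (hcnt_le j t')
  have h1 := hsplit t
  have h2 := hsplit t'
  omega

end Stmt14Step

/-- Theorem 5: the lex-leader formula `ψ` built from a suitable
subset `G` of an admissible group `G_syn` is a conjunctive symmetry breaker for
the associated group of `G_syn`. -/
theorem stmt_14 {X : Type*} [Fintype X] [DecidableEq X] {k : ℕ} (D : Fin k → Set X)
    (hsorted : ∀ i j : Fin k, D i ⊂ D j → i < j)
    (Gsyn : Set (BF (X ⊕ Fin k) → BF (X ⊕ Fin k))) (hG : AdmissibleGroup D Gsyn)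
    (G : Set (BF (X ⊕ Fin k) → BF (X ⊕ Fin k))) (hsub : G ⊆ Gsyn)
    (c1 : ∀ g ∈ G, ∀ i : Fin k, ∀ x ∈ D i,
      DependsOnlyOn (g (ev (Sum.inl x))) (Sum.inl '' D i))
    (c2 : ∀ g ∈ G, ∀ i : Fin k,
      DependsOnlyOn (g (ev (Sum.inr i))) (Sum.inr '' {j : Fin k | D j = D i}))
    (c3 : ∀ g ∈ G, ∀ i j : Fin k, (¬ D i ⊆ D j ∧ ¬ D j ⊆ D i) →
      g (ev (Sum.inr i)) ≠ ev (Sum.inr i) →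
      g (ev (Sum.inr j)) = ev (Sum.inr j) ∧
        ∀ x ∈ D j \ D i, g (ev (Sum.inl x)) = ev (Sum.inl x))
    (ψ : BF (X ⊕ Fin k))
    (hψ : ∀ τ : X ⊕ Fin k → Bool, ψ τ = true ↔
      ∀ g ∈ G, ∀ i : Fin k,
        ((∀ x ∈ D i, τ (Sum.inl x) = g (ev (Sum.inl x)) τ) ∧
         (∀ j : Fin k, j < i → τ (Sum.inr j) = g (ev (Sum.inr j)) τ)) →
        (τ (Sum.inr i) = true → g (ev (Sum.inr i)) τ = true)) :
    ConjSymBreaker (Associated D Gsyn) ψ := by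
  classical
  intro s
  set Brel : Interp D → Interp D → Prop := fun a b =>
    ∀ σ, ∃ g ∈ Gsyn, induced (pushX g σ) b = pushA g (induced σ a) with hBrel
  have brefl : ∀ a, Brel a a := by
    intro a σ
    exact ⟨id, hG.id_mem, by rw [pushX_id', pushA_id']⟩
  have btrans : ∀ a b c', Brel a b → Brel b c' → Brel a c' := by
    intro a b c' hab hbc σ
    obtain ⟨g1, h1, e1⟩ := hab σ
    obtain ⟨g2, h2, e2⟩ := hbc (pushX g1 σ)
    obtain ⟨g1', hmem1', pair1⟩ := hG.inv_mem g1 h1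
    obtain ⟨g2', hmem2', pair2⟩ := hG.inv_mem g2 h2
    refine ⟨g1 ∘ g2, hG.comp_mem g1 h1 g2 h2, ?_⟩
    rw [pushX_comp' pair1.presSat pair2.varX, pushA_comp' pair1.presSat, ← e1]
    exact e2
  have hex : ∃ n : ℕ, ∃ u : Interp D, (Brel s u ∧ Brel u s) ∧ Mval u = n :=
    ⟨Mval s, s, ⟨brefl s, brefl s⟩, rfl⟩
  obtain ⟨u, ⟨hsu, hus⟩, hMu⟩ := Nat.find_spec hex
  have hmin : ∀ v : Interp D, (Brel s v ∧ Brel v s) → Nat.find hex ≤ Mval v :=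
    fun v hv => Nat.find_min' hex ⟨v, hv, rfl⟩
  have htruth : Truth ψ u := by
    intro σ
    rw [hψ (induced σ u)]
    intro g hgG i hprem hti
    by_contra hne
    have Ff : g (ev (Sum.inr i)) (induced σ u) = false := by
      simpa using hne
    have PX : ∀ x ∈ D i, σ x = g (ev (Sum.inl x)) (induced σ u) := hprem.1
    have PY : ∀ j : Fin k, j < i → u.sk j σ = g (ev (Sum.inr j)) (induced σ u) := hprem.2
    have Fi' : u.sk i σ = true := hti
    obtain ⟨t', hB1, hB2, hlt⟩ :=
      step_lemma hsorted hG hsub c1 c2 c3 hgG u σ i PX PY Fi' Ff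
    have hreach' : Brel s t' ∧ Brel t' s := ⟨btrans _ _ _ hsu hB1, btrans _ _ _ hB2 hus⟩
    have hle := hmin t' hreach'
    omega
  refine ⟨⇑(Equiv.swap s u), ⟨(Equiv.swap s u).bijective, ?_⟩, ?_⟩
  · intro s' σ
    by_cases h1 : s' = s
    · subst h1
      rw [Equiv.swap_apply_left]
      exact hsu σ
    · by_cases h2 : s' = u
      · subst h2
        rw [Equiv.swap_apply_right]
        exact hus σ
      · rw [Equiv.swap_apply_of_ne_of_ne h1 h2]
        exact brefl s' σ
  · have : Equiv.swap s u s = u := Equiv.swap_apply_left s u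
    rw [this]
    exact htruth


end DQBF
end
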